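/- Let G be the clique star 𝕂_{u,n_2,...,n_{k+1}}, obtained from the star K_{1,k} by replacing each edge with a clique K_{n_i} (i = 2,...,k+1, each n_i ≥ 2), all cliques sharing only the center vertex u; set n = 1 + ∑_{i=2}^{k+1}(n_i − 1). Then the Laplacian spectrum of G is {0, n, 1 with multiplicity k−1, and n_i with multiplicity n_i−2 for each i = 2,...,k+1}. -/

import Mathlib

open Matrix BigOperators Polynomial
open scoped Classical

/-- The clique star `𝕂_{u,n_2,…,n_{k+1}}`: `k` cliques of sizes `c i` all sharing
exactly one common (center) vertex.  The vertices are the center `none` together with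
the `c i - 1` non-center vertices `some ⟨i, a⟩` of the `i`-th clique. -/
def cliqueStar {k : ℕ} (c : Fin k → ℕ) :
    SimpleGraph (Option (Σ i : Fin k, Fin (c i - 1))) where
  Adj x y := x ≠ y ∧ ∀ a b, x = some a → y = some b → a.1 = b.1
  symm := by
    constructor
    rintro x y ⟨hxy, h⟩
    exact ⟨hxy.symm, fun a b ha hb => (h b a hb ha).symm⟩
  loopless := by constructor; rintro x ⟨hxx, -⟩; exact hxx rfl

/-!
Put the centre last. Away from the centre, `x • 1 - L` is block diagonal with blocks
`(x - cᵢ) • 1 + J` (`J` the all-ones matrix) of size `cᵢ - 1`; each has determinant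
`(x - cᵢ) ^ (cᵢ - 2) * (x - 1)` and all row sums `x - 1`. The centre row and column are all ones
apart from the corner `x - (n - 1)`. Subtracting `(x - 1)⁻¹` times the other columns from the
centre column makes the matrix block triangular, so
`det (x • 1 - L) = det(blocks) * (x - (n - 1) - (n - 1) / (x - 1))`, which is the claimed
polynomial at every `x ∉ {1, cᵢ}`, hence identically.
-/

namespace Matrix

section Ring

variable {R : Type*} {n : Type*} [Fintype n]

theorem eq_of_offDiag_eq_of_mulVec_one_eq [NonAssocRing R] {M N : Matrix n n R}
    (hoff : ∀ i j, i ≠ j → M i j = N i j) (hsum : M *ᵥ 1 = N *ᵥ 1) : M = N := by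
  ext i j
  obtain rfl | hij := eq_or_ne i j
  · have hrow := congrFun hsum i
    simp only [mulVec, dotProduct, Pi.one_apply, mul_one] at hrow
    have hrest : ∑ j ∈ Finset.univ.erase i, M i j = ∑ j ∈ Finset.univ.erase i, N i j :=
      Finset.sum_congr rfl fun j hj => hoff i j (Finset.ne_of_mem_erase hj).symm
    rw [← Finset.add_sum_erase _ _ (Finset.mem_univ i),
      ← Finset.add_sum_erase _ _ (Finset.mem_univ i), hrest] at hrow
    exact add_right_cancel hrow
  · exact hoff i j hij

theorem blockDiagonal'_mulVec [NonUnitalNonAssocSemiring R] {ι : Type*} [Fintype ι]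
    [DecidableEq ι] {β : ι → Type*} [∀ i, Fintype (β i)] (M : ∀ i, Matrix (β i) (β i) R)
    (v : (Σ i, β i) → R) :
    blockDiagonal' M *ᵥ v = fun p => (M p.1 *ᵥ fun b => v ⟨p.1, b⟩) p.2 := by
  ext ⟨i, a⟩
  simp only [mulVec, dotProduct, Fintype.sum_sigma]
  rw [Finset.sum_eq_single i (fun j _ hji => Finset.sum_eq_zero fun b _ => by
    rw [blockDiagonal'_apply_ne M a b hji.symm, zero_mul]) (by simp)]
  simp [blockDiagonal'_apply_eq]

theorem smul_one_add_ones_mulVec_one [DecidableEq n] [Semiring R] (a : R) :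
    (a • (1 : Matrix n n R) + of fun _ _ => 1) *ᵥ 1 = (a + Fintype.card n) • 1 := by
  ext i
  simp [mulVec, dotProduct, one_apply, Finset.sum_add_distrib]

theorem det_blockDiagonal' [CommRing R] {ι : Type*} [Fintype ι] [LinearOrder ι]
    {β : ι → Type*} [∀ i, Fintype (β i)] [∀ i, DecidableEq (β i)]
    (M : ∀ i, Matrix (β i) (β i) R) :
    det (blockDiagonal' M) = ∏ i, det (M i) := by
  rw [(blockTriangular_blockDiagonal' M).det_fintype]
  refine Finset.prod_congr rfl fun i _ => ?_
  rw [← det_submatrix_equiv_self (Equiv.sigmaSubtype i).symm]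
  congr 1
  ext a b
  simp [toSquareBlock_def, Equiv.sigmaSubtype, blockDiagonal'_apply_eq]

end Ring

section Field

variable {K : Type*} [Field K] {n : Type*} [Fintype n] [DecidableEq n]

theorem det_smul_one_add_ones [Nonempty n] {a : K} (ha : a ≠ 0) :
    det (a • (1 : Matrix n n K) + of fun _ _ => 1)
      = a ^ (Fintype.card n - 1) * (a + Fintype.card n) := by
  have hfactor : a • (1 : Matrix n n K) + of (fun _ _ => 1)
      = a • (1 + replicateCol Unit (fun _ : n => a⁻¹) * replicateRow Unit (fun _ : n => (1 : K))
          : Matrix n n K) := by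
    ext i j
    by_cases h : i = j <;> simp [h, mul_add, ha, mul_apply]
  obtain ⟨m, hm⟩ : ∃ m, Fintype.card n = m + 1 :=
    ⟨_, (Nat.succ_pred_eq_of_pos Fintype.card_pos).symm⟩
  rw [hfactor, det_smul, det_one_add_replicateCol_mul_replicateRow, hm]
  simp only [dotProduct, one_mul, Finset.sum_const, Finset.card_univ, hm, nsmul_eq_mul]
  field_simp
  push_cast
  ring

theorem det_fromBlocks_ones {A : Matrix n n K} {r : K} (hr : r ≠ 0) (hA : A *ᵥ 1 = r • 1)
    (d : K) :
    det (fromBlocks A (of fun _ _ => 1) (of fun _ _ => 1) (of fun _ _ : Unit => d))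
      = det A * (d - Fintype.card n / r) := by
  have hcol : fromBlocks A (of fun _ _ => 1) (of fun _ _ => 1) (of fun _ _ : Unit => d)
        * fromBlocks 1 (of fun _ _ => -r⁻¹) 0 1
      = fromBlocks A 0 (of fun _ _ => 1) (of fun _ _ => d - Fintype.card n / r) := by
    have hArow (i : n) : ∑ j, A i j = r := by simpa [mulVec, dotProduct] using congrFun hA i
    rw [fromBlocks_multiply]
    congr 1 <;> ext <;> simp [mul_apply, ← Finset.sum_mul, hArow, hr]
    · ring
  have hdet := congrArg det hcol
  rwa [det_mul, det_fromBlocks_zero₂₁, det_one, det_one, mul_one, mul_one, det_fromBlocks_zero₁₂,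
    det_unique (of fun _ _ : Unit => _)] at hdet

end Field

end Matrix

open Matrix

section CliqueStar

variable {k : ℕ}

def cliqueStarLeafBlock (c : Fin k → ℕ) (x : ℝ) :
    Matrix (Σ i : Fin k, Fin (c i - 1)) (Σ i : Fin k, Fin (c i - 1)) ℝ :=
  blockDiagonal' fun i =>
    (x - c i) • (1 : Matrix (Fin (c i - 1)) (Fin (c i - 1)) ℝ) + of fun _ _ => 1

variable {c : Fin k → ℕ}

@[simp]
theorem cliqueStar_adj_none_some (p : Σ i : Fin k, Fin (c i - 1)) :
    (cliqueStar c).Adj none (some p) :=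
  ⟨by simp, by simp⟩

@[simp]
theorem cliqueStar_adj_some_none (p : Σ i : Fin k, Fin (c i - 1)) :
    (cliqueStar c).Adj (some p) none :=
  (cliqueStar_adj_none_some p).symm

@[simp]
theorem cliqueStar_adj_some_some {p q : Σ i : Fin k, Fin (c i - 1)} :
    (cliqueStar c).Adj (some p) (some q) ↔ p ≠ q ∧ p.1 = q.1 := by
  simp [cliqueStar]

theorem cliqueStarLeafBlock_mulVec_one (hc : ∀ i, 1 ≤ c i) (x : ℝ) :
    cliqueStarLeafBlock c x *ᵥ 1 = (x - 1) • 1 := by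
  ext ⟨i, a⟩
  rw [cliqueStarLeafBlock, blockDiagonal'_mulVec]
  simp only [Pi.one_apply, ← Pi.one_def, smul_one_add_ones_mulVec_one]
  simp [Nat.cast_sub (hc i)]

theorem scalar_sub_lapMatrix_cliqueStar (hc : ∀ i, 1 ≤ c i) (x : ℝ) :
    scalar _ x - (cliqueStar c).lapMatrix ℝ
      = (fromBlocks (cliqueStarLeafBlock c x) (of fun _ _ => 1) (of fun _ _ => 1)
          (of fun _ _ : Unit => x - Fintype.card (Σ i : Fin k, Fin (c i - 1)))).submatrix
        (Equiv.optionEquivSumPUnit _) (Equiv.optionEquivSumPUnit _) := by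
  -- `L` has zero row sums, so the degrees never have to be computed.
  refine eq_of_offDiag_eq_of_mulVec_one_eq ?_ ?_
  · intro v w hne
    rw [Matrix.sub_apply, scalar_apply, diagonal_apply_ne _ hne, SimpleGraph.lapMatrix,
      Matrix.sub_apply, SimpleGraph.degMatrix, diagonal_apply_ne _ hne]
    rcases v with _ | ⟨i, a⟩ <;> rcases w with _ | ⟨j, b⟩
    · exact absurd rfl hne
    · simp
    · simp
    · obtain rfl | hij := eq_or_ne i j
      · have hab : a ≠ b := by simpa using hne
        simp [cliqueStarLeafBlock, blockDiagonal'_apply_eq, hab]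
      · simp [cliqueStarLeafBlock, blockDiagonal'_apply_ne _ _ _ hij, hij]
  · have hL : (cliqueStar c).lapMatrix ℝ *ᵥ 1 = 0 :=
      SimpleGraph.lapMatrix_mulVec_const_eq_zero _
    rw [sub_mulVec, hL, submatrix_mulVec_equiv, fromBlocks_mulVec]
    ext (_ | p)
    · simp [mulVec, dotProduct]
    · simp [cliqueStarLeafBlock_mulVec_one hc, mulVec, dotProduct]

theorem det_scalar_sub_lapMatrix_cliqueStar (hk : 1 ≤ k) (hc : ∀ i, 2 ≤ c i) {x : ℝ}
    (hx1 : x ≠ 1) (hxc : ∀ i, x ≠ c i) :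
    det (scalar _ x - (cliqueStar c).lapMatrix ℝ)
      = x * (x - (1 + ∑ i, (c i - 1) : ℕ)) * (x - 1) ^ (k - 1)
        * ∏ i, (x - c i) ^ (c i - 2) := by
  have hc1 (i : Fin k) : 1 ≤ c i := (hc i).trans' one_le_two
  have hblock (i : Fin k) :
      det ((x - c i) • (1 : Matrix (Fin (c i - 1)) (Fin (c i - 1)) ℝ) + of fun _ _ => 1)
        = (x - c i) ^ (c i - 2) * (x - 1) := by
    have : Nonempty (Fin (c i - 1)) := ⟨⟨0, by have := hc i; omega⟩⟩
    rw [det_smul_one_add_ones (sub_ne_zero.2 (hxc i)), Fintype.card_fin, Nat.cast_sub (hc1 i),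
      Nat.sub_sub]
    ring
  rw [scalar_sub_lapMatrix_cliqueStar hc1, det_submatrix_equiv_self,
    det_fromBlocks_ones (sub_ne_zero.2 hx1) (cliqueStarLeafBlock_mulVec_one hc1 x),
    cliqueStarLeafBlock, det_blockDiagonal']
  simp only [hblock, Finset.prod_mul_distrib, Finset.prod_const, Finset.card_univ,
    Fintype.card_fin, Fintype.card_sigma]
  obtain ⟨k, rfl⟩ := Nat.exists_eq_add_of_le' hk
  have : x - 1 ≠ 0 := sub_ne_zero.2 hx1
  push_cast
  field_simp
  ring

end CliqueStar

/-- The Laplacian spectrum of the clique star `𝕂_{u,n_2,…,n_{k+1}}`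
with clique sizes `c i ≥ 2` and `N = 1 + ∑ (c i - 1)` vertices is
`{0, N, 1^{[k-1]}, (c i)^{[c i - 2]}}`, stated via the characteristic polynomial. -/
theorem lap_spectrum_cliqueStar {k : ℕ} (hk : 1 ≤ k)
    (c : Fin k → ℕ) (hc : ∀ i, 2 ≤ c i) (N : ℕ) (hN : N = 1 + ∑ i, (c i - 1)) :
    (SimpleGraph.lapMatrix ℝ (cliqueStar c)).charpoly
      = X * (X - C (N : ℝ)) * (X - C (1 : ℝ)) ^ (k - 1)
        * ∏ i : Fin k, (X - C (c i : ℝ)) ^ (c i - 2) := by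
  refine eq_of_infinite_eval_eq _ _
    (((Set.finite_range fun i => (c i : ℝ)).insert 1).infinite_compl.mono ?_)
  intro x hx
  simp only [Set.mem_compl_iff, Set.mem_insert_iff, Set.mem_range, not_or, not_exists] at hx
  rw [Set.mem_ofPred_eq, eval_charpoly,
    det_scalar_sub_lapMatrix_cliqueStar hk hc hx.1 fun i h => hx.2 i h.symm, hN]
  simp only [eval_mul, eval_sub, eval_pow, eval_X, eval_C, eval_prod]
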